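/- Under the stated operator setting, fix 1 ≤ k ≤ r. For every ε > 0 there exists δ > 0 such that for every finite-dimensional subspace Φ of H of dimension n ≥ k with d_F(span{η₁, …, η_k}, Φ) < δ, the Ritz values λ₁ ≥ ⋯ ≥ λ_n of T on Φ satisfy |λ_i − μ_i| < ε for all 1 ≤ i ≤ k. -/

import Mathlib

/-!
Both inequalities are quantitative Courant–Fischer arguments. For `i ≤ k` a dimension count gives
a nonzero `x ∈ span{γ₁, …, γ_i}` orthogonal to `η₁, …, η_{i-1}`: its Rayleigh quotient is at
least `λ_i` (it lies in the span of the top `i` Ritz vectors) and at most `μ_i` (it is orthogonal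
to the top `i - 1` eigenvectors, and `T` is block diagonal with respect to
`span{η₁, …, η_r} ⊕ span{η₁, …, η_r}ᗮ`), so `λ_i ≤ μ_i`. Symmetrically, a nonzero
`u ∈ span{η₁, …, η_i}` orthogonal to `γ₁, …, γ_{i-1}` has Rayleigh quotient at least `μ_i`, while
`v = P_Φ u` has Rayleigh quotient at most `λ_i`. As `‖u - v‖ = ‖P_{Φᗮ} u‖ ≤ d_F ‖u‖`,
`‖v‖ ≤ ‖u‖`, `λ_i ≥ 0` and `T ≥ 0`, comparing the two quadratic forms gives
`μ_i - 2‖T‖ d_F ≤ λ_i`.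
-/

open scoped RealInnerProductSpace ENNReal
open Submodule Filter

noncomputable section

variable {H : Type*} [NormedAddCommGroup H] [InnerProductSpace ℝ H] [CompleteSpace H]

/-- Orthogonal projection onto `U`, as an operator `H → H` (defined to be `0` in the
degenerate case where `U` admits no orthogonal projection). -/
noncomputable def proj (U : Submodule ℝ H) : H →L[ℝ] H := by
  classical
  exact if h : HasOrthogonalProjection U then
    (haveI := h; U.subtypeL ∘L orthogonalProjection U)
  else 0

/-- Squared Hilbert–Schmidt norm of an operator, computed in a fixed Hilbert basis of `H`. -/
noncomputable def hsNormSq (A : H →L[ℝ] H) : ℝ≥0∞ :=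
  ∑' i : (exists_hilbertBasis ℝ H).choose,
    (‖A ((exists_hilbertBasis ℝ H).choose_spec.choose i)‖₊ : ℝ≥0∞) ^ 2

/-- Hilbert–Schmidt (Frobenius) norm of an operator. -/
noncomputable def hsNorm (A : H →L[ℝ] H) : ℝ := Real.sqrt (hsNormSq A).toReal

/-- Projection distance `d_F(U, W) = ‖P_{Wᗮ} P_U‖_F`. -/
noncomputable def dF (U W : Submodule ℝ H) : ℝ := hsNorm ((proj Wᗮ) ∘L (proj U))

/-- Gap distance `d₂(U, W) = ‖P_{Wᗮ} P_U‖₂`. -/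
noncomputable def d2 (U W : Submodule ℝ H) : ℝ := ‖(proj Wᗮ) ∘L (proj U)‖


/-- A Ritz decomposition of (the compression to `Φ` of) `T`: an orthonormal basis
`γ₁, …, γ_n` of the `n`-dimensional subspace `Φ` with `P_Φ T γ_i = λ_i γ_i` and
`λ₁ ≥ λ₂ ≥ ⋯ ≥ λ_n` (so the `λ_i` are the Ritz values of `T` on `Φ`, in decreasing
order with multiplicity). -/
def RitzData {H : Type*} [NormedAddCommGroup H] [InnerProductSpace ℝ H] [CompleteSpace H]
    (Φ : Submodule ℝ H) (T : H →L[ℝ] H) (n : ℕ) (lam : ℕ → ℝ) (γ : ℕ → H) : Prop :=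
  (∀ i ∈ Set.Icc 1 n, ∀ j ∈ Set.Icc 1 n, ⟪γ i, γ j⟫ = if i = j then (1 : ℝ) else 0) ∧
  span ℝ (γ '' Set.Icc 1 n) = Φ ∧
  (∀ i ∈ Set.Icc 1 n, proj Φ (T (γ i)) = lam i • γ i) ∧
  (∀ i ∈ Set.Icc 1 n, ∀ j ∈ Set.Icc 1 n, i ≤ j → lam j ≤ lam i)

end

section

variable {H : Type*} [NormedAddCommGroup H] [InnerProductSpace ℝ H]

lemma proj_eq_starProjection (U : Submodule ℝ H) [h : U.HasOrthogonalProjection] :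
    proj U = U.starProjection := by
  rw [proj, dif_pos h]
  rfl

lemma mem_orthogonal_span_image {ι : Type*} {e : ι → H} {s : Set ι} {y : H}
    (h : ∀ i ∈ s, ⟪e i, y⟫ = 0) : y ∈ (span ℝ (e '' s))ᗮ := by
  rw [mem_orthogonal]
  intro u hu
  induction hu using span_induction with
  | mem u hu => obtain ⟨i, hi, rfl⟩ := hu; exact h i hi
  | zero => exact inner_zero_left _
  | add u v _ _ hu hv => rw [inner_add_left, hu, hv, add_zero]
  | smul a u _ hu => rw [real_inner_smul_left, hu, mul_zero]

lemma exists_ne_zero_mem_orthogonal (W K : Submodule ℝ H) [FiniteDimensional ℝ W]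
    [FiniteDimensional ℝ K] (h : Module.finrank ℝ K < Module.finrank ℝ W) :
    ∃ x ∈ W, x ∈ Kᗮ ∧ x ≠ 0 := by
  obtain ⟨x, hx, hx0⟩ := (Submodule.ne_bot_iff _).1 <| LinearMap.ker_ne_bot_of_finrank_lt
    (f := K.orthogonalProjectionOnto.toLinearMap ∘ₗ W.subtype) h
  exact ⟨x, x.2, orthogonalProjectionOnto_eq_zero_iff.1 hx, by simpa using hx0⟩

lemma inner_map_self_le_inner_map_sub_add {T : H →L[ℝ] H} (hT : ∀ x y, ⟪T x, y⟫ = ⟪x, T y⟫)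
    (hTpos : ∀ u, 0 ≤ ⟪u, T u⟫) (u w : H) :
    ⟪u, T u⟫ ≤ ⟪u - w, T (u - w)⟫ + 2 * ‖T‖ * ‖u‖ * ‖w‖ := by
  have hexpand : ⟪u - w, T (u - w)⟫ = ⟪u, T u⟫ - 2 * ⟪T u, w⟫ + ⟪w, T w⟫ := by
    simp only [map_sub, inner_sub_left, inner_sub_right]
    rw [← hT u w, real_inner_comm w (T u)]
    ring
  have hcross : ⟪T u, w⟫ ≤ ‖T‖ * ‖u‖ * ‖w‖ :=
    (real_inner_le_norm _ _).trans (mul_le_mul_of_nonneg_right (T.le_opNorm u) (norm_nonneg w))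
  linarith [hTpos w]

lemma sub_le_of_norm_starProjection_orthogonal_le {T : H →L[ℝ] H}
    (hT : ∀ x y, ⟪T x, y⟫ = ⟪x, T y⟫) (hTpos : ∀ u, 0 ≤ ⟪u, T u⟫) (Φ : Submodule ℝ H)
    [Φ.HasOrthogonalProjection] {u : H} (hu0 : u ≠ 0) {a l d : ℝ} (hl : 0 ≤ l)
    (hu : a * ‖u‖ ^ 2 ≤ ⟪u, T u⟫)
    (hv : ⟪Φ.starProjection u, T (Φ.starProjection u)⟫ ≤ l * ‖Φ.starProjection u‖ ^ 2)
    (hw : ‖Φᗮ.starProjection u‖ ≤ d * ‖u‖) : a - 2 * ‖T‖ * d ≤ l := by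
  have hcompare := inner_map_self_le_inner_map_sub_add hT hTpos u (Φᗮ.starProjection u)
  rw [← eq_sub_of_add_eq (starProjection_add_starProjection_orthogonal u)] at hcompare
  have hvu := norm_starProjection_apply_le Φ u
  have hmul : a * ‖u‖ ^ 2 ≤ (l + 2 * ‖T‖ * d) * ‖u‖ ^ 2 :=
    calc a * ‖u‖ ^ 2
        ≤ l * ‖Φ.starProjection u‖ ^ 2 + 2 * ‖T‖ * ‖u‖ * ‖Φᗮ.starProjection u‖ :=
          hu.trans (hcompare.trans (by gcongr))
      _ ≤ l * ‖u‖ ^ 2 + 2 * ‖T‖ * ‖u‖ * (d * ‖u‖) := by gcongr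
      _ = (l + 2 * ‖T‖ * d) * ‖u‖ ^ 2 := by ring
  linarith [le_of_mul_le_mul_right hmul (pow_pos (norm_pos_iff.2 hu0) 2)]

def OrthonormalOn (e : ℕ → H) (s : Set ℕ) : Prop :=
  ∀ i ∈ s, ∀ j ∈ s, ⟪e i, e j⟫ = if i = j then (1 : ℝ) else 0

instance (e : ℕ → H) (s : Set ℕ) [Finite s] : FiniteDimensional ℝ (span ℝ (e '' s)) :=
  FiniteDimensional.span_of_finite ℝ (s.toFinite.image e)

namespace OrthonormalOn

variable {e : ℕ → H}

lemma mono {s t : Set ℕ} (he : OrthonormalOn e s) (hts : t ⊆ s) : OrthonormalOn e t :=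
  fun i hi j hj => he i (hts hi) j (hts hj)

lemma orthonormal {s : Set ℕ} (he : OrthonormalOn e s) : Orthonormal ℝ fun i : s => e i :=
  orthonormal_iff_ite.2 fun i j => by simpa [Subtype.ext_iff] using he i i.2 j j.2

lemma finrank_span (s : Finset ℕ) (he : OrthonormalOn e s) :
    Module.finrank ℝ (span ℝ (e '' s)) = s.card := by
  rw [Set.image_eq_range, finrank_span_eq_card he.orthonormal.linearIndependent]
  simp

lemma exists_ne_zero_mem_span_orthogonal {s : Finset ℕ} (he : OrthonormalOn e s) (f : ℕ → H)
    {t : Finset ℕ} (hts : t.card < s.card) :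
    ∃ x ∈ span ℝ (e '' s), x ∈ (span ℝ (f '' t))ᗮ ∧ x ≠ 0 := by
  classical
  refine exists_ne_zero_mem_orthogonal _ _ (lt_of_le_of_lt ?_ (he.finrank_span s ▸ hts))
  rw [← Finset.coe_image]
  exact (finrank_span_finset_le_card _).trans Finset.card_image_le

variable {s : Finset ℕ}

lemma inner_sum_smul (he : OrthonormalOn e s) {j : ℕ} (hj : j ∈ s) (c : ℕ → ℝ) :
    ⟪e j, ∑ i ∈ s, c i • e i⟫ = c j := by
  rw [inner_sum, Finset.sum_eq_single j (fun i hi hij => by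
    rw [real_inner_smul_right, he j hj i hi, if_neg (Ne.symm hij), mul_zero]) (absurd hj)]
  rw [real_inner_smul_right, he j hj j hj, if_pos rfl, mul_one]

lemma starProjection_span_eq_sum (he : OrthonormalOn e s) (x : H) :
    (span ℝ (e '' s)).starProjection x = ∑ i ∈ s, ⟪e i, x⟫ • e i :=
  eq_starProjection_of_mem_orthogonal
    (sum_mem fun i hi => smul_mem _ _ (subset_span ⟨i, hi, rfl⟩))
    (mem_orthogonal_span_image fun j hj => by
      rw [inner_sub_right, he.inner_sum_smul hj, sub_self])

lemma eq_sum_of_mem_span (he : OrthonormalOn e s) {x : H} (hx : x ∈ span ℝ (e '' s)) :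
    x = ∑ i ∈ s, ⟪e i, x⟫ • e i := by
  rw [← he.starProjection_span_eq_sum, starProjection_eq_self_iff.2 hx]

lemma mem_span_sdiff (he : OrthonormalOn e s) {t : Finset ℕ} {x : H}
    (hx : x ∈ span ℝ (e '' s)) (hxt : ∀ i ∈ s, i ∈ t → ⟪e i, x⟫ = 0) :
    x ∈ span ℝ (e '' ↑(s \ t)) := by
  rw [he.eq_sum_of_mem_span hx, ← Finset.sum_subset Finset.sdiff_subset fun i hi hit => by
    rw [hxt i hi (by simpa [hi] using hit), zero_smul]]
  exact sum_mem fun i hi => smul_mem _ _ (subset_span ⟨i, hi, rfl⟩)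

lemma inner_sum_map_sum (he : OrthonormalOn e s) {T : H →L[ℝ] H} {t : ℕ → ℝ}
    (hT : ∀ i ∈ s, ∀ j ∈ s, ⟪e i, T (e j)⟫ = t j * ⟪e i, e j⟫) (c : ℕ → ℝ) :
    ⟪∑ i ∈ s, c i • e i, T (∑ j ∈ s, c j • e j)⟫ = ∑ i ∈ s, c i ^ 2 * t i := by
  have hTsum : ∀ i ∈ s,
      ⟪e i, T (∑ j ∈ s, c j • e j)⟫ = ⟪e i, ∑ j ∈ s, (c j * t j) • e j⟫ := by
    intro i hi
    simp only [map_sum, map_smul, inner_sum, real_inner_smul_right]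
    exact Finset.sum_congr rfl fun j hj => by rw [hT i hi j hj, mul_assoc]
  simp only [sum_inner, real_inner_smul_left]
  refine Finset.sum_congr rfl fun i hi => ?_
  rw [hTsum i hi, he.inner_sum_smul hi]
  ring

lemma norm_sum_sq (he : OrthonormalOn e s) (c : ℕ → ℝ) :
    ‖∑ i ∈ s, c i • e i‖ ^ 2 = ∑ i ∈ s, c i ^ 2 := by
  rw [← real_inner_self_eq_norm_sq]
  simpa using he.inner_sum_map_sum (T := ContinuousLinearMap.id ℝ H) (t := 1)
    (fun i _ j _ => (one_mul _).symm) c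

lemma norm_sq_eq_sum_of_mem_span (he : OrthonormalOn e s) {x : H}
    (hx : x ∈ span ℝ (e '' s)) : ‖x‖ ^ 2 = ∑ i ∈ s, ⟪e i, x⟫ ^ 2 := by
  conv_lhs => rw [he.eq_sum_of_mem_span hx]
  exact he.norm_sum_sq _

lemma inner_map_self_le {T : H →L[ℝ] H} {t : ℕ → ℝ} {a : ℝ} (he : OrthonormalOn e s)
    (hT : ∀ i ∈ s, ∀ j ∈ s, ⟪e i, T (e j)⟫ = t j * ⟪e i, e j⟫) (ht : ∀ i ∈ s, t i ≤ a)
    {x : H} (hx : x ∈ span ℝ (e '' s)) : ⟪x, T x⟫ ≤ a * ‖x‖ ^ 2 := by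
  rw [he.eq_sum_of_mem_span hx, he.inner_sum_map_sum hT, he.norm_sum_sq, Finset.mul_sum]
  exact Finset.sum_le_sum fun i hi => by nlinarith [ht i hi, sq_nonneg ⟪e i, x⟫]

lemma le_inner_map_self {T : H →L[ℝ] H} {t : ℕ → ℝ} {a : ℝ} (he : OrthonormalOn e s)
    (hT : ∀ i ∈ s, ∀ j ∈ s, ⟪e i, T (e j)⟫ = t j * ⟪e i, e j⟫) (ht : ∀ i ∈ s, a ≤ t i)
    {x : H} (hx : x ∈ span ℝ (e '' s)) : a * ‖x‖ ^ 2 ≤ ⟪x, T x⟫ := by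
  rw [he.eq_sum_of_mem_span hx, he.inner_sum_map_sum hT, he.norm_sum_sq, Finset.mul_sum]
  exact Finset.sum_le_sum fun i hi => by nlinarith [ht i hi, sq_nonneg ⟪e i, x⟫]

lemma norm_apply_le (he : OrthonormalOn e s) (B : H →L[ℝ] H) {x : H}
    (hx : x ∈ span ℝ (e '' s)) : ‖B x‖ ≤ √(∑ i ∈ s, ‖B (e i)‖ ^ 2) * ‖x‖ :=
  calc ‖B x‖ = ‖∑ i ∈ s, ⟪e i, x⟫ • B (e i)‖ := by
        conv_lhs => rw [he.eq_sum_of_mem_span hx]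
        simp only [map_sum, map_smul]
    _ ≤ ∑ i ∈ s, ‖B (e i)‖ * |⟪e i, x⟫| := by
        refine (norm_sum_le _ _).trans_eq (Finset.sum_congr rfl fun i _ => ?_)
        rw [norm_smul, Real.norm_eq_abs, mul_comm]
    _ ≤ √(∑ i ∈ s, ‖B (e i)‖ ^ 2) * √(∑ i ∈ s, |⟪e i, x⟫| ^ 2) :=
        Real.sum_mul_le_sqrt_mul_sqrt _ _ _
    _ = √(∑ i ∈ s, ‖B (e i)‖ ^ 2) * ‖x‖ := by
        simp only [sq_abs]
        rw [← he.norm_sq_eq_sum_of_mem_span hx, Real.sqrt_sq (norm_nonneg x)]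

end OrthonormalOn

lemma inner_map_self_le_of_mem_orthogonal {T : H →L[ℝ] H} (hT : ∀ x y, ⟪T x, y⟫ = ⟪x, T y⟫)
    {e : ℕ → H} {μ : ℕ → ℝ} {s t : Finset ℕ} {a b : ℝ} (he : OrthonormalOn e s)
    (heig : ∀ i ∈ s, T (e i) = μ i • e i)
    (hinv : ∀ w ∈ (span ℝ (e '' s))ᗮ, T w ∈ (span ℝ (e '' s))ᗮ)
    (hres : ∀ w ∈ (span ℝ (e '' s))ᗮ, ⟪w, T w⟫ ≤ b * ‖w‖ ^ 2)
    (hμ : ∀ i ∈ s \ t, μ i ≤ a) (hba : b ≤ a) {x : H} (hx : x ∈ (span ℝ (e '' t))ᗮ) :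
    ⟪x, T x⟫ ≤ a * ‖x‖ ^ 2 := by
  set V := span ℝ (e '' s)
  set p := V.starProjection x
  set w := Vᗮ.starProjection x
  have hxpw : x = p + w := (starProjection_add_starProjection_orthogonal x).symm
  have hpV : p ∈ V := starProjection_apply_mem _ _
  have hwV : w ∈ Vᗮ := starProjection_apply_mem _ _
  have hp : p ∈ span ℝ (e '' ↑(s \ t)) := he.mem_span_sdiff hpV fun i hi hit => by
    rw [← inner_starProjection_left_eq_right,
      starProjection_eq_self_iff.2 (subset_span (Set.mem_image_of_mem e hi))]
    exact inner_right_of_mem_orthogonal (subset_span (Set.mem_image_of_mem e hit)) hx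
  have hpT : ⟪p, T p⟫ ≤ a * ‖p‖ ^ 2 :=
    (he.mono (Finset.coe_subset.2 Finset.sdiff_subset)).inner_map_self_le
      (fun i _ j hj => by rw [heig j (Finset.sdiff_subset hj), real_inner_smul_right]) hμ hp
  have hpTw : ⟪p, T w⟫ = 0 := inner_right_of_mem_orthogonal hpV (hinv w hwV)
  have hwTp : ⟪w, T p⟫ = 0 := by rw [← hT, real_inner_comm, hpTw]
  calc ⟪x, T x⟫ = ⟪p, T p⟫ + ⟪w, T w⟫ := by
        rw [hxpw, map_add, inner_add_left, inner_add_right, inner_add_right, hpTw, hwTp]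
        ring
    _ ≤ a * ‖p‖ ^ 2 + a * ‖w‖ ^ 2 :=
        add_le_add hpT ((hres w hwV).trans (mul_le_mul_of_nonneg_right hba (sq_nonneg _)))
    _ = a * ‖x‖ ^ 2 := by
        rw [hxpw, norm_add_sq_real, inner_right_of_mem_orthogonal hpV hwV]
        ring

end

section

variable {H : Type*} [NormedAddCommGroup H] [InnerProductSpace ℝ H] [CompleteSpace H]

namespace OrthonormalOn

variable {e : ℕ → H} {s : Finset ℕ}

lemma hsNorm_comp_proj (he : OrthonormalOn e s) (B : H →L[ℝ] H) :
    hsNorm (B ∘L proj (span ℝ (e '' s))) = √(∑ i ∈ s, ‖B (e i)‖ ^ 2) := by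
  set b := (exists_hilbertBasis ℝ H).choose_spec.choose
  set A := B ∘L proj (span ℝ (e '' s))
  have hA : ∀ y, ‖A y‖ ^ 2 = ∑ i ∈ s, ∑ j ∈ s, ⟪e i, y⟫ * ⟪y, e j⟫ * ⟪B (e i), B (e j)⟫ := by
    intro y
    simp only [A, ContinuousLinearMap.comp_apply, proj_eq_starProjection,
      he.starProjection_span_eq_sum, map_sum, map_smul, ← real_inner_self_eq_norm_sq, sum_inner,
      inner_sum, real_inner_smul_left, real_inner_smul_right]
    exact Finset.sum_congr rfl fun i _ => Finset.sum_congr rfl fun j _ => by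
      rw [real_inner_comm y (e j), real_inner_comm (B (e j))]; ring
  have hsum : HasSum (fun x => ‖A (b x)‖ ^ 2) (∑ i ∈ s, ‖B (e i)‖ ^ 2) := by
    have hdiag : ∑ i ∈ s, ‖B (e i)‖ ^ 2 =
        ∑ i ∈ s, ∑ j ∈ s, ⟪e i, e j⟫ * ⟪B (e i), B (e j)⟫ := by
      refine Finset.sum_congr rfl fun i hi => ?_
      rw [Finset.sum_eq_single i (fun j hj hji => by rw [he i hi j hj, if_neg hji.symm, zero_mul])
        (absurd hi), he i hi i hi, if_pos rfl, one_mul, real_inner_self_eq_norm_sq]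
    simp only [hA, hdiag]
    exact hasSum_sum fun i _ => hasSum_sum fun j _ =>
      (b.hasSum_inner_mul_inner (e i) (e j)).mul_right _
  have hsq : hsNormSq A = ENNReal.ofReal (∑ i ∈ s, ‖B (e i)‖ ^ 2) := by
    rw [hsNormSq, ← hsum.tsum_eq,
      ENNReal.ofReal_tsum_of_nonneg (fun _ => sq_nonneg _) hsum.summable]
    refine tsum_congr fun x => ?_
    rw [ENNReal.ofReal_pow (norm_nonneg _), ofReal_norm, enorm_eq_nnnorm]
  rw [hsNorm, hsq, ENNReal.toReal_ofReal (Finset.sum_nonneg fun _ _ => sq_nonneg _)]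

lemma norm_proj_orthogonal_le_dF (he : OrthonormalOn e s) (Φ : Submodule ℝ H) {x : H}
    (hx : x ∈ span ℝ (e '' s)) : ‖proj Φᗮ x‖ ≤ dF (span ℝ (e '' s)) Φ * ‖x‖ := by
  rw [dF, he.hsNorm_comp_proj]
  exact he.norm_apply_le _ hx

end OrthonormalOn

namespace RitzData

variable {Φ : Submodule ℝ H} {T : H →L[ℝ] H} {n : ℕ} {lam : ℕ → ℝ} {γ : ℕ → H}

lemma orthonormalOn (hR : RitzData Φ T n lam γ) : OrthonormalOn γ ↑(Finset.Icc 1 n) := by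
  rw [Finset.coe_Icc]
  exact hR.1

lemma span_eq (hR : RitzData Φ T n lam γ) : span ℝ (γ '' ↑(Finset.Icc 1 n)) = Φ := by
  rw [Finset.coe_Icc]
  exact hR.2.1

lemma inner_map_eq (hR : RitzData Φ T n lam γ) :
    ∀ i ∈ Finset.Icc 1 n, ∀ j ∈ Finset.Icc 1 n, ⟪γ i, T (γ j)⟫ = lam j * ⟪γ i, γ j⟫ := by
  intro i hi j hj
  have hγi : γ i ∈ Φ := hR.span_eq ▸ subset_span (Set.mem_image_of_mem γ hi)
  have : FiniteDimensional ℝ Φ := hR.span_eq ▸ inferInstance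
  calc ⟪γ i, T (γ j)⟫ = ⟪γ i, proj Φ (T (γ j))⟫ := by
        rw [proj_eq_starProjection, ← inner_starProjection_left_eq_right,
          starProjection_eq_self_iff.2 hγi]
    _ = lam j * ⟪γ i, γ j⟫ := by rw [hR.2.2.1 j (by simpa using hj), real_inner_smul_right]

lemma nonneg (hR : RitzData Φ T n lam γ) (hTpos : ∀ u, 0 ≤ ⟪u, T u⟫) {i : ℕ}
    (hi : i ∈ Finset.Icc 1 n) : 0 ≤ lam i := by
  have h := hR.inner_map_eq i hi i hi
  rw [hR.orthonormalOn i hi i hi, if_pos rfl, mul_one] at h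
  exact h ▸ hTpos (γ i)

lemma le_inner_map_self (hR : RitzData Φ T n lam γ) {i : ℕ} (hin : i ≤ n) {x : H}
    (hx : x ∈ span ℝ (γ '' ↑(Finset.Icc 1 i))) : lam i * ‖x‖ ^ 2 ≤ ⟪x, T x⟫ := by
  have hsub : Finset.Icc 1 i ⊆ Finset.Icc 1 n := Finset.Icc_subset_Icc_right hin
  refine (hR.orthonormalOn.mono (Finset.coe_subset.2 hsub)).le_inner_map_self
    (fun j hj l hl => hR.inner_map_eq j (hsub hj) l (hsub hl)) (fun j hj => ?_) hx
  simp only [Finset.mem_Icc] at hj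
  exact hR.2.2.2 j ⟨hj.1, by omega⟩ i ⟨by omega, hin⟩ hj.2

lemma inner_map_self_le (hR : RitzData Φ T n lam γ) {i : ℕ} (hi : 1 ≤ i) {x : H} (hx : x ∈ Φ)
    (hxo : x ∈ (span ℝ (γ '' ↑(Finset.Icc 1 (i - 1))))ᗮ) : ⟪x, T x⟫ ≤ lam i * ‖x‖ ^ 2 := by
  rw [← hR.span_eq] at hx
  have hx' := hR.orthonormalOn.mem_span_sdiff (t := Finset.Icc 1 (i - 1)) hx fun j _ hj =>
    inner_right_of_mem_orthogonal (subset_span (Set.mem_image_of_mem γ hj)) hxo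
  refine (hR.orthonormalOn.mono (Finset.coe_subset.2 Finset.sdiff_subset)).inner_map_self_le
    (fun j hj l hl => hR.inner_map_eq j (Finset.sdiff_subset hj) l (Finset.sdiff_subset hl))
    (fun j hj => ?_) hx'
  simp only [Finset.mem_sdiff, Finset.mem_Icc] at hj
  exact hR.2.2.2 i ⟨hi, by omega⟩ j ⟨hj.1.1, hj.1.2⟩ (by omega)

theorem le_eigenvalue (hR : RitzData Φ T n lam γ) (hT : ∀ x y, ⟪T x, y⟫ = ⟪x, T y⟫)
    {r : ℕ} {η : ℕ → H} {μ : ℕ → ℝ} (hη : OrthonormalOn η (Set.Icc 1 r))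
    (hTeig : ∀ i ∈ Set.Icc 1 r, T (η i) = μ i • η i) (hμ : AntitoneOn μ (Set.Icc 1 (r + 1)))
    (hTinv : ∀ w ∈ (span ℝ (η '' Set.Icc 1 r))ᗮ, T w ∈ (span ℝ (η '' Set.Icc 1 r))ᗮ)
    (hTres : ∀ w ∈ (span ℝ (η '' Set.Icc 1 r))ᗮ, ⟪w, T w⟫ ≤ μ (r + 1) * ‖w‖ ^ 2)
    {i : ℕ} (hi : i ∈ Set.Icc 1 n) (hir : i ≤ r) : lam i ≤ μ i := by
  obtain ⟨hi1, hin⟩ := hi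
  rw [← Finset.coe_Icc] at hη hTeig hTinv hTres
  have hcard : (Finset.Icc 1 (i - 1)).card < (Finset.Icc 1 i).card := by
    simp only [Nat.card_Icc]; omega
  obtain ⟨x, hxγ, hxη, hx0⟩ := (hR.orthonormalOn.mono (Finset.coe_subset.2
    (Finset.Icc_subset_Icc_right hin))).exists_ne_zero_mem_span_orthogonal η hcard
  have hup : ⟪x, T x⟫ ≤ μ i * ‖x‖ ^ 2 :=
    inner_map_self_le_of_mem_orthogonal hT hη hTeig hTinv hTres
      (fun j hj => by
        simp only [Finset.mem_sdiff, Finset.mem_Icc] at hj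
        exact hμ ⟨hi1, by omega⟩ ⟨hj.1.1, by omega⟩ (by omega))
      (hμ ⟨hi1, by omega⟩ ⟨by omega, le_rfl⟩ (by omega)) hxη
  exact le_of_mul_le_mul_right ((hR.le_inner_map_self hin hxγ).trans hup)
    (pow_pos (norm_pos_iff.2 hx0) 2)

theorem eigenvalue_sub_le (hR : RitzData Φ T n lam γ) (hT : ∀ x y, ⟪T x, y⟫ = ⟪x, T y⟫)
    (hTpos : ∀ u, 0 ≤ ⟪u, T u⟫) {k : ℕ} {η : ℕ → H} {μ : ℕ → ℝ}
    (hη : OrthonormalOn η (Set.Icc 1 k)) (hTeig : ∀ i ∈ Set.Icc 1 k, T (η i) = μ i • η i)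
    (hμ : AntitoneOn μ (Set.Icc 1 k)) {i : ℕ} (hik : i ∈ Set.Icc 1 k) (hin : i ≤ n) :
    μ i - 2 * ‖T‖ * dF (span ℝ (η '' Set.Icc 1 k)) Φ ≤ lam i := by
  obtain ⟨hi1, hik⟩ := hik
  rw [← Finset.coe_Icc] at hη hTeig ⊢
  have : FiniteDimensional ℝ Φ := hR.span_eq ▸ inferInstance
  have hsub : Finset.Icc 1 i ⊆ Finset.Icc 1 k := Finset.Icc_subset_Icc_right hik
  have hcard : (Finset.Icc 1 (i - 1)).card < (Finset.Icc 1 i).card := by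
    simp only [Nat.card_Icc]; omega
  obtain ⟨u, huη, huγ, hu0⟩ :=
    (hη.mono (Finset.coe_subset.2 hsub)).exists_ne_zero_mem_span_orthogonal γ hcard
  have hγΦ : span ℝ (γ '' ↑(Finset.Icc 1 (i - 1))) ≤ Φ := hR.span_eq ▸
    span_mono (Set.image_mono (Finset.coe_subset.2 (Finset.Icc_subset_Icc_right (by omega))))
  refine sub_le_of_norm_starProjection_orthogonal_le hT hTpos Φ hu0
    (hR.nonneg hTpos (Finset.mem_Icc.2 ⟨hi1, hin⟩)) ?_ ?_ ?_
  · refine (hη.mono (Finset.coe_subset.2 hsub)).le_inner_map_self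
      (fun j _ l hl => by rw [hTeig l (hsub hl), real_inner_smul_right]) (fun j hj => ?_) huη
    simp only [Finset.mem_Icc] at hj
    exact hμ ⟨hj.1, by omega⟩ ⟨hi1, hik⟩ hj.2
  · refine hR.inner_map_self_le hi1 (starProjection_apply_mem Φ u) ?_
    rw [eq_sub_of_add_eq (starProjection_add_starProjection_orthogonal u)]
    exact sub_mem huγ (orthogonal_le hγΦ (starProjection_apply_mem _ _))
  · simpa only [proj_eq_starProjection] using
      hη.norm_proj_orthogonal_le_dF Φ (span_mono (Set.image_mono (Finset.coe_subset.2 hsub)) huη)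

end RitzData

theorem stmt3_general {H : Type*} [NormedAddCommGroup H] [InnerProductSpace ℝ H] [CompleteSpace H]
    (T : H →L[ℝ] H)
    (hTsa : ∀ x y : H, ⟪T x, y⟫ = ⟪x, T y⟫)
    (hTpos : ∀ u : H, 0 ≤ ⟪u, T u⟫)
    (r : ℕ) (η : ℕ → H) (μ : ℕ → ℝ)
    (hη : ∀ i ∈ Set.Icc 1 r, ∀ j ∈ Set.Icc 1 r, ⟪η i, η j⟫ = if i = j then (1 : ℝ) else 0)
    (hTeig : ∀ i ∈ Set.Icc 1 r, T (η i) = μ i • η i)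
    (hμmono : ∀ i ∈ Set.Icc 1 (r + 1), ∀ j ∈ Set.Icc 1 (r + 1), i ≤ j → μ j ≤ μ i)
    (hTinv : ∀ w ∈ (span ℝ (η '' Set.Icc 1 r))ᗮ, T w ∈ (span ℝ (η '' Set.Icc 1 r))ᗮ)
    (hTres : ∀ w ∈ (span ℝ (η '' Set.Icc 1 r))ᗮ, ⟪w, T w⟫ ≤ μ (r + 1) * ‖w‖ ^ 2)
    (k : ℕ) (hkr : k ≤ r) :
    ∀ ε > 0, ∃ δ > 0, ∀ (Φ : Submodule ℝ H) (n : ℕ),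
      FiniteDimensional ℝ Φ → Module.finrank ℝ Φ = n → k ≤ n →
      dF (span ℝ (η '' Set.Icc 1 k)) Φ < δ →
      ∀ (lam : ℕ → ℝ) (γ : ℕ → H), RitzData Φ T n lam γ →
        ∀ i ∈ Set.Icc 1 k, |lam i - μ i| < ε := by
  intro ε hε
  refine ⟨ε / (2 * ‖T‖ + 1), by positivity, ?_⟩
  intro Φ n _ _ hkn hdF lam γ hR i hi
  have hin : i ≤ n := hi.2.trans hkn
  have hup := hR.le_eigenvalue hTsa hη hTeig hμmono hTinv hTres ⟨hi.1, hin⟩ (hi.2.trans hkr)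
  have hlow := hR.eigenvalue_sub_le hTsa hTpos
    (OrthonormalOn.mono hη (Set.Icc_subset_Icc_right hkr))
    (fun j hj => hTeig j (Set.Icc_subset_Icc_right hkr hj))
    (AntitoneOn.mono (s := Set.Icc 1 (r + 1)) hμmono (Set.Icc_subset_Icc_right (by omega))) hi hin
  have hsmall : 2 * ‖T‖ * dF (span ℝ (η '' Set.Icc 1 k)) Φ < ε :=
    calc _ ≤ 2 * ‖T‖ * (ε / (2 * ‖T‖ + 1)) := by gcongr
      _ < ε := by
        rw [mul_div_assoc', div_lt_iff₀ (by positivity)]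
        linarith
  rw [abs_sub_lt_iff]
  constructor <;> linarith

/-- Convergence of the top `k` Ritz values: for every `ε > 0` there is
`δ > 0` such that whenever `d_F(span{η₁..η_k}, Φ) < δ`, the Ritz values satisfy
`|λ_i − μ_i| < ε` for `1 ≤ i ≤ k`. -/
theorem stmt3 {H : Type*} [NormedAddCommGroup H] [InnerProductSpace ℝ H] [CompleteSpace H]
    (T : H →L[ℝ] H)
    (hTsa : ∀ x y : H, ⟪T x, y⟫ = ⟪x, T y⟫)
    (hTpos : ∀ u : H, 0 ≤ ⟪u, T u⟫)
    (r : ℕ) (hr : 1 ≤ r) (η : ℕ → H) (μ : ℕ → ℝ)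
    (hη : ∀ i ∈ Set.Icc 1 r, ∀ j ∈ Set.Icc 1 r, ⟪η i, η j⟫ = if i = j then (1 : ℝ) else 0)
    (hTeig : ∀ i ∈ Set.Icc 1 r, T (η i) = μ i • η i)
    (hμmono : ∀ i ∈ Set.Icc 1 (r + 1), ∀ j ∈ Set.Icc 1 (r + 1), i ≤ j → μ j ≤ μ i)
    (hμr : 0 < μ r) (hμr1 : 0 ≤ μ (r + 1))
    (hTinv : ∀ w ∈ (span ℝ (η '' Set.Icc 1 r))ᗮ, T w ∈ (span ℝ (η '' Set.Icc 1 r))ᗮ)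
    (hTres : ∀ w ∈ (span ℝ (η '' Set.Icc 1 r))ᗮ, ⟪w, T w⟫ ≤ μ (r + 1) * ‖w‖ ^ 2)
    (k : ℕ) (hk1 : 1 ≤ k) (hkr : k ≤ r) :
    ∀ ε > 0, ∃ δ > 0, ∀ (Φ : Submodule ℝ H) (n : ℕ),
      FiniteDimensional ℝ Φ → Module.finrank ℝ Φ = n → k ≤ n →
      dF (span ℝ (η '' Set.Icc 1 k)) Φ < δ →
      ∀ (lam : ℕ → ℝ) (γ : ℕ → H), RitzData Φ T n lam γ →
        ∀ i ∈ Set.Icc 1 k, |lam i - μ i| < ε :=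
  stmt3_general T hTsa hTpos r η μ hη hTeig hμmono hTinv hTres k hkr

end
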